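/- Let λ ≥ 0 and let f ∈ M_σ^λ(φ) have Taylor coefficients aₙ. Set D₁ = B₁² + (1+λ)(B₁−B₂). If (1+λ)B₁ ≤ |D₁|, then |a₃| ≤ (B₁/(2(1+2λ)(1+λ)|D₁|)) · min{ (1/2)·( |(3+5λ)B₁² + (1+λ)²(B₁−B₂)| + |(1+3λ)B₁² − (1+λ)²(B₁−B₂)| ), ( |(1+3λ)B₁² − (1+λ)²(B₁−B₂)| + |(1+λ)B₁² + (1+λ)²(B₁−B₂)| ) }. -/

import Mathlib

/-!
Let `a₂, a₃` be the Taylor coefficients of `f`, and `c₁, c₂` (resp. `d₁, d₂`) those of the Schwarz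
functions in the subordinations of `f` and of `g = f⁻¹`. Comparing the second and third Taylor
coefficients of the subordination identity, with denominators cleared, gives
`(1 + λ) a₂ = B₁ c₁` and `2 (1 + 2λ) a₃ - (1 + 3λ) a₂² = B₁ c₂ + B₂ c₁²`, and the same relations
for `g`, whose coefficients are `-a₂` and `2 a₂² - a₃` by Faà di Bruno; in particular `d₁ = -c₁`.
The Schwarz–Pick lemma gives `|c₂|, |d₂| ≤ 1 - |c₁|²`. With `Q, P = 2 (1 + 2λ) B₁² ± (1 + λ) D₁`
(the two expressions in the statement), the four relations yield
`4 (1 + 2λ) (1 + λ) D₁ a₃ = B₁ (Q c₂ + P d₂ + (Q + P) c₁²)`, whence the first bound by the triangle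
inequality; the second comes from the relations for `f` alone together with
`|c₁|² |D₁| ≤ (1 + λ) B₁`, a consequence of the sum of the two third-order relations.
-/

open Metric Set

noncomputable section

/-- `f` is bi-univalent on the unit disk, with `g` the univalent analytic
continuation of `f⁻¹` to the unit disk. -/
def IsBiUnivalent (f g : ℂ → ℂ) : Prop :=
  DifferentiableOn ℂ f (ball 0 1) ∧ f 0 = 0 ∧ deriv f 0 = 1 ∧
  Set.InjOn f (ball 0 1) ∧
  DifferentiableOn ℂ g (ball 0 1) ∧ Set.InjOn g (ball 0 1) ∧
  ∀ w : ℂ, ‖w‖ < 1/4 → f (g w) = w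

/-- `φ` is an analytic univalent function on the unit disk with positive real
part there, normalized by `φ 0 = 1`. -/
def IsMaMinda (φ : ℂ → ℂ) : Prop :=
  DifferentiableOn ℂ φ (ball 0 1) ∧ Set.InjOn φ (ball 0 1) ∧ φ 0 = 1 ∧
  ∀ z ∈ ball (0:ℂ) 1, 0 < (φ z).re

/-- Membership in `M^λ(φ)`: `f` is normalized analytic on the unit disk and
`λ(1 + z f''(z)/f'(z)) + (1-λ) z f'(z)/f(z) ≺ φ(z)`. -/
def MemMlam (lam : ℝ) (φ f : ℂ → ℂ) : Prop :=
  DifferentiableOn ℂ f (ball 0 1) ∧ f 0 = 0 ∧ deriv f 0 = 1 ∧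
  ∃ ω : ℂ → ℂ, DifferentiableOn ℂ ω (ball 0 1) ∧ ω 0 = 0 ∧
    (∀ z ∈ ball (0:ℂ) 1, ω z ∈ ball (0:ℂ) 1) ∧
    ∀ z ∈ ball (0:ℂ) 1, z ≠ 0 →
      (lam : ℂ) * (1 + z * iteratedDeriv 2 f z / deriv f z)
        + (1 - (lam : ℂ)) * (z * deriv f z / f z) = φ (ω z)

open Filter Topology

section TaylorCoeff

variable {𝕜 : Type*} [NontriviallyNormedField 𝕜]

def taylorCoeff (h : 𝕜 → 𝕜) (n : ℕ) : 𝕜 := iteratedDeriv n h 0 / n.factorial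

@[simp] lemma taylorCoeff_zero (h : 𝕜 → 𝕜) : taylorCoeff h 0 = h 0 := by
  simp [taylorCoeff]

lemma taylorCoeff_one (h : 𝕜 → 𝕜) : taylorCoeff h 1 = deriv h 0 := by
  simp [taylorCoeff]

lemma Filter.EventuallyEq.taylorCoeff_eq {h k : 𝕜 → 𝕜} (hk : h =ᶠ[𝓝 0] k) (n : ℕ) :
    taylorCoeff h n = taylorCoeff k n := by
  rw [taylorCoeff, taylorCoeff, (hk.iteratedDeriv n).eq_of_nhds]

@[simp] lemma taylorCoeff_id (n : ℕ) :
    taylorCoeff (fun z : 𝕜 => z) n = if n = 1 then 1 else 0 := by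
  by_cases hn : n = 1 <;> simp [taylorCoeff, iteratedDeriv_fun_id_zero, hn]

lemma taylorCoeff_deriv [CharZero 𝕜] (h : 𝕜 → 𝕜) (n : ℕ) :
    taylorCoeff (deriv h) n = (n + 1) * taylorCoeff h (n + 1) := by
  rw [taylorCoeff, taylorCoeff, ← iteratedDeriv_succ', Nat.factorial_succ]
  push_cast
  field_simp

lemma taylorCoeff_comp_one {g f : 𝕜 → 𝕜} (hg : AnalyticAt 𝕜 g 0) (hf : AnalyticAt 𝕜 f 0)
    (hf0 : f 0 = 0) : taylorCoeff (fun z => g (f z)) 1 = taylorCoeff g 1 * taylorCoeff f 1 := by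
  rw [← hf0] at hg
  simp only [taylorCoeff_one, ← Function.comp_def,
    deriv_comp _ hg.differentiableAt hf.differentiableAt, hf0]

variable [CompleteSpace 𝕜]

lemma taylorCoeff_fun_add {h k : 𝕜 → 𝕜} (hh : AnalyticAt 𝕜 h 0) (hk : AnalyticAt 𝕜 k 0)
    (n : ℕ) : taylorCoeff (fun z => h z + k z) n = taylorCoeff h n + taylorCoeff k n := by
  rw [taylorCoeff, iteratedDeriv_fun_add hh.contDiffAt hk.contDiffAt, add_div]
  rfl

lemma taylorCoeff_const_mul {h : 𝕜 → 𝕜} (c : 𝕜) (hh : AnalyticAt 𝕜 h 0) (n : ℕ) :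
    taylorCoeff (fun z => c * h z) n = c * taylorCoeff h n := by
  rw [taylorCoeff, iteratedDeriv_const_mul c hh.contDiffAt, mul_div_assoc]
  rfl

lemma taylorCoeff_fun_mul [CharZero 𝕜] {h k : 𝕜 → 𝕜} (hh : AnalyticAt 𝕜 h 0)
    (hk : AnalyticAt 𝕜 k 0) (n : ℕ) : taylorCoeff (fun z => h z * k z) n =
      ∑ i ∈ Finset.range (n + 1), taylorCoeff h i * taylorCoeff k (n - i) := by
  rw [taylorCoeff, iteratedDeriv_fun_mul hh.contDiffAt hk.contDiffAt, Finset.sum_div]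
  refine Finset.sum_congr rfl fun i hi => ?_
  have hin : i ≤ n := Nat.lt_succ_iff.mp (Finset.mem_range.mp hi)
  have := Nat.factorial_ne_zero n
  have := Nat.factorial_ne_zero i
  have := Nat.factorial_ne_zero (n - i)
  rw [taylorCoeff, taylorCoeff, Nat.choose_eq_factorial_div_factorial hin,
    Nat.cast_div (Nat.factorial_mul_factorial_dvd_factorial hin)
      (Nat.cast_ne_zero.mpr (by positivity))]
  push_cast
  field_simp

lemma taylorCoeff_id_mul [CharZero 𝕜] {h : 𝕜 → 𝕜} (hh : AnalyticAt 𝕜 h 0) (n : ℕ) :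
    taylorCoeff (fun z => z * h z) (n + 1) = taylorCoeff h n := by
  rw [taylorCoeff_fun_mul (h := fun z => z) analyticAt_id hh, Finset.sum_eq_single 1] <;>
    simp +contextual

lemma taylorCoeff_comp_two {g f : 𝕜 → 𝕜} (hg : AnalyticAt 𝕜 g 0) (hf : AnalyticAt 𝕜 f 0)
    (hf0 : f 0 = 0) : taylorCoeff (fun z => g (f z)) 2 =
      taylorCoeff g 1 * taylorCoeff f 2 + taylorCoeff g 2 * taylorCoeff f 1 ^ 2 := by
  rw [← hf0] at hg
  simp only [taylorCoeff, ← Function.comp_def, iteratedDeriv_comp_two hg.contDiffAt hf.contDiffAt,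
    hf0]
  simp only [Nat.factorial, Nat.succ_eq_add_one, Nat.reduceAdd, zero_add, mul_one, Nat.cast_ofNat,
    iteratedDeriv_one, Nat.cast_one, div_one]
  ring

lemma taylorCoeff_comp_three [CharZero 𝕜] {g f : 𝕜 → 𝕜} (hg : AnalyticAt 𝕜 g 0)
    (hf : AnalyticAt 𝕜 f 0) (hf0 : f 0 = 0) : taylorCoeff (fun z => g (f z)) 3 =
      taylorCoeff g 1 * taylorCoeff f 3 + 2 * taylorCoeff g 2 * taylorCoeff f 1 * taylorCoeff f 2 +
        taylorCoeff g 3 * taylorCoeff f 1 ^ 3 := by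
  rw [← hf0] at hg
  simp only [taylorCoeff, ← Function.comp_def,
    iteratedDeriv_comp_three hg.contDiffAt hf.contDiffAt, hf0]
  simp only [Nat.factorial, Nat.succ_eq_add_one, Nat.reduceAdd, zero_add, mul_one, Nat.reduceMul,
    Nat.cast_ofNat, iteratedDeriv_one, Nat.cast_one, div_one]
  ring

end TaylorCoeff

section CoefficientRelations

variable {𝕜 : Type*} [NontriviallyNormedField 𝕜] [CompleteSpace 𝕜]

lemma eventuallyEq_mul_of_subordination {lam : 𝕜} {f p : 𝕜 → 𝕜} (hf : AnalyticAt 𝕜 f 0)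
    (hf0 : f 0 = 0) (hf1 : deriv f 0 = 1)
    (heq : ∀ᶠ z in 𝓝[≠] 0, lam * (1 + z * iteratedDeriv 2 f z / deriv f z)
      + (1 - lam) * (z * deriv f z / f z) = p z) :
    (fun z => lam * ((deriv f z + z * deriv (deriv f) z) * f z)
      + (1 - lam) * (z * deriv f z * deriv f z)) =ᶠ[𝓝 0] fun z => p z * (deriv f z * f z) := by
  have hf_ne : ∀ᶠ z in 𝓝[≠] 0, f z ≠ 0 :=
    hf.differentiableAt.hasDerivAt.eventually_ne (hf1 ▸ one_ne_zero)
  have hf'_ne : ∀ᶠ z in 𝓝 0, deriv f z ≠ 0 :=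
    hf.deriv.continuousAt.eventually_ne (hf1 ▸ one_ne_zero)
  have hpunct := (heq.and hf_ne).and (nhdsWithin_le_nhds hf'_ne)
  filter_upwards [eventually_nhdsWithin_iff.mp hpunct] with z hz
  rcases eq_or_ne z 0 with rfl | hz0
  · simp [hf0]
  · obtain ⟨⟨hz, hfz⟩, hf'z⟩ := hz hz0
    rw [← hz, iteratedDeriv_succ, iteratedDeriv_one]
    field_simp

lemma taylorCoeff_relations_of_subordination [CharZero 𝕜] {lam : 𝕜} {φ f ω : 𝕜 → 𝕜}
    (hφ : AnalyticAt 𝕜 φ 0) (hf : AnalyticAt 𝕜 f 0) (hω : AnalyticAt 𝕜 ω 0) (hφ0 : φ 0 = 1)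
    (hf0 : f 0 = 0) (hf1 : deriv f 0 = 1) (hω0 : ω 0 = 0)
    (heq : ∀ᶠ z in 𝓝[≠] 0, lam * (1 + z * iteratedDeriv 2 f z / deriv f z)
      + (1 - lam) * (z * deriv f z / f z) = φ (ω z)) :
    (1 + lam) * taylorCoeff f 2 = taylorCoeff φ 1 * taylorCoeff ω 1 ∧
      2 * (1 + 2 * lam) * taylorCoeff f 3 - (1 + 3 * lam) * taylorCoeff f 2 ^ 2 =
        taylorCoeff φ 1 * taylorCoeff ω 2 + taylorCoeff φ 2 * taylorCoeff ω 1 ^ 2 := by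
  have H := eventuallyEq_mul_of_subordination hf hf0 hf1 heq
  have hf' := hf.deriv
  have hf'' := hf'.deriv
  have hφ' : AnalyticAt 𝕜 φ (ω 0) := by rwa [hω0]
  have h2 := H.taylorCoeff_eq 2
  have h3 := H.taylorCoeff_eq 3
  -- The analyticity facts above feed `fun_prop`; `with_unfolding_all` lets it see `fun z => z`
  -- as `id`.
  simp (disch := with_unfolding_all fun_prop) only [taylorCoeff_fun_add, taylorCoeff_const_mul,
    taylorCoeff_fun_mul, Finset.sum_range_succ, Finset.sum_range_zero, taylorCoeff_deriv] at h2 h3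
  simp only [taylorCoeff_comp_one hφ hω hω0, taylorCoeff_comp_two hφ hω hω0, taylorCoeff_one,
    taylorCoeff_zero, taylorCoeff_id, hf0, hf1, hω0, hφ0, deriv_id'', CharP.cast_eq_zero,
    Nat.cast_one, Nat.cast_ofNat, Nat.reduceAdd, Nat.reduceSub, Nat.add_one_sub_one, tsub_self,
    tsub_zero, zero_tsub, OfNat.ofNat_ne_one, ↓reduceIte, Finset.range_zero, Finset.sum_const_zero,
    zero_add, add_zero, one_mul, mul_one, zero_mul, mul_zero] at h2 h3
  simp only [taylorCoeff_one]
  constructor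
  · linear_combination h2
  · linear_combination h3 - 3 * taylorCoeff f 2 * h2

lemma taylorCoeff_of_comp_eventuallyEq_id [CharZero 𝕜] {f g : 𝕜 → 𝕜} (hf : AnalyticAt 𝕜 f 0)
    (hg : AnalyticAt 𝕜 g 0) (hg0 : g 0 = 0) (hf1 : deriv f 0 = 1)
    (hfg : (fun w => f (g w)) =ᶠ[𝓝 0] fun w => w) :
    taylorCoeff g 2 = -taylorCoeff f 2 ∧
      taylorCoeff g 3 = 2 * taylorCoeff f 2 ^ 2 - taylorCoeff f 3 := by
  have h1 := hfg.taylorCoeff_eq 1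
  have h2 := hfg.taylorCoeff_eq 2
  have h3 := hfg.taylorCoeff_eq 3
  rw [taylorCoeff_comp_one hf hg hg0, taylorCoeff_one f, hf1] at h1
  rw [taylorCoeff_comp_two hf hg hg0, taylorCoeff_one f, hf1] at h2
  rw [taylorCoeff_comp_three hf hg hg0, taylorCoeff_one f, hf1] at h3
  simp only [taylorCoeff_id, one_mul, if_true, OfNat.ofNat_ne_one, if_false] at h1 h2 h3
  rw [h1] at h2 h3
  constructor
  · linear_combination h2
  · linear_combination h3 - 2 * taylorCoeff f 2 * h2

end CoefficientRelations

section SchwarzPick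

open Complex ComplexConjugate

lemma sq_norm_one_sub_conj_mul_sub_sq_norm_sub (a w : ℂ) :
    ‖1 - conj a * w‖ ^ 2 - ‖w - a‖ ^ 2 = (1 - ‖a‖ ^ 2) * (1 - ‖w‖ ^ 2) := by
  simp only [Complex.sq_norm, normSq_apply, sub_re, sub_im, mul_re, mul_im, one_re, one_im, conj_re,
    conj_im]
  ring

lemma one_sub_conj_mul_ne_zero {a w : ℂ} (ha : ‖a‖ < 1) (hw : ‖w‖ ≤ 1) : 1 - conj a * w ≠ 0 := by
  refine sub_ne_zero.mpr fun h => ?_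
  have := congrArg norm h
  rw [norm_one, norm_mul, norm_conj] at this
  nlinarith [norm_nonneg a, norm_nonneg w]

lemma norm_sub_div_one_sub_conj_mul_lt_one {a w : ℂ} (ha : ‖a‖ < 1) (hw : ‖w‖ < 1) :
    ‖(w - a) / (1 - conj a * w)‖ < 1 := by
  rw [norm_div, div_lt_one (norm_pos_iff.mpr (one_sub_conj_mul_ne_zero ha hw.le))]
  refine lt_of_pow_lt_pow_left₀ 2 (norm_nonneg _) ?_
  have := sq_norm_one_sub_conj_mul_sub_sq_norm_sub a w
  have : 0 < (1 - ‖a‖ ^ 2) * (1 - ‖w‖ ^ 2) := by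
    apply mul_pos <;> nlinarith [norm_nonneg a, norm_nonneg w]
  linarith

lemma hasDerivAt_sub_div_one_sub_conj_mul {a : ℂ} (ha : ‖a‖ < 1) :
    HasDerivAt (fun w => (w - a) / (1 - conj a * w)) (1 - conj a * a)⁻¹ a := by
  have hden := one_sub_conj_mul_ne_zero ha ha.le
  refine (((hasDerivAt_id' a).sub_const a).fun_div
    (((hasDerivAt_id' a).const_mul (conj a)).const_sub 1) hden).congr_deriv ?_
  field_simp
  ring

/-- The Schwarz–Pick lemma at the centre of the unit disc. -/
theorem norm_deriv_le_one_sub_sq_norm {ψ : ℂ → ℂ} (hd : DifferentiableOn ℂ ψ (ball 0 1))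
    (hmaps : MapsTo ψ (ball 0 1) (closedBall 0 1)) : ‖deriv ψ 0‖ ≤ 1 - ‖ψ 0‖ ^ 2 := by
  have h0 : (0 : ℂ) ∈ ball (0 : ℂ) 1 := mem_ball_self one_pos
  by_cases hopen : MapsTo ψ (ball 0 1) (ball 0 1)
  · set a := ψ 0
    have ha : ‖a‖ < 1 := by simpa using hopen h0
    set M : ℂ → ℂ := fun w => (w - a) / (1 - conj a * w)
    -- Composing with the disc automorphism `M` moves `ψ 0` to the centre.
    have hMd : DifferentiableOn ℂ (M ∘ ψ) (ball 0 1) := by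
      refine DifferentiableOn.comp (fun w hw => ?_) hd hopen
      have hw : ‖w‖ < 1 := by simpa using hw
      exact ((differentiableAt_id.sub_const a).div ((differentiableAt_id.const_mul _).const_sub 1)
        (one_sub_conj_mul_ne_zero ha hw.le)).differentiableWithinAt
    have hMmaps : MapsTo (M ∘ ψ) (ball 0 1) (closedBall ((M ∘ ψ) 0) 1) := by
      intro z hz
      have hz : ‖ψ z‖ < 1 := by simpa using hopen hz
      simpa [M, a] using (norm_sub_div_one_sub_conj_mul_lt_one ha hz).le
    have hderiv : deriv (M ∘ ψ) 0 = (1 - conj a * a)⁻¹ * deriv ψ 0 :=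
      ((hasDerivAt_sub_div_one_sub_conj_mul ha).comp 0
        (hd.differentiableAt (ball_mem_nhds 0 one_pos)).hasDerivAt).deriv
    have hschwarz := norm_deriv_le_one_of_mapsTo_ball hMd hMmaps one_pos
    have hpos : 0 < 1 - ‖a‖ ^ 2 := by nlinarith [norm_nonneg a]
    rw [hderiv, conj_mul', norm_mul, norm_inv, ← ofReal_pow, ← ofReal_one, ← ofReal_sub,
      Complex.norm_of_nonneg hpos.le, inv_mul_le_iff₀ hpos, mul_one] at hschwarz
    exact hschwarz
  · obtain ⟨z₀, hz₀, hz₀_not⟩ : ∃ z₀ ∈ ball (0 : ℂ) 1, ψ z₀ ∉ ball (0 : ℂ) 1 := by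
      simpa [MapsTo] using hopen
    have hnorm : ‖ψ z₀‖ = 1 :=
      le_antisymm (by simpa using hmaps hz₀) (by simpa using hz₀_not)
    have hmax : IsMaxOn (norm ∘ ψ) (ball 0 1) z₀ := fun z hz => by
      simpa [hnorm] using hmaps hz
    have hconst := eqOn_of_isPreconnected_of_isMaxOn_norm (convex_ball (0 : ℂ) 1).isPreconnected
      isOpen_ball hd hz₀ hmax
    have hderiv : deriv ψ 0 = 0 := by
      rw [(hconst.eventuallyEq_of_mem (ball_mem_nhds 0 one_pos)).deriv_eq]
      exact deriv_const _ _
    rw [hderiv, hconst h0, Function.const_apply, hnorm]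
    norm_num

theorem norm_taylorCoeff_two_le_one_sub_sq {ω : ℂ → ℂ} (hd : DifferentiableOn ℂ ω (ball 0 1))
    (h0 : ω 0 = 0) (hmaps : MapsTo ω (ball 0 1) (ball 0 1)) :
    ‖taylorCoeff ω 2‖ ≤ 1 - ‖taylorCoeff ω 1‖ ^ 2 := by
  set ψ := dslope ω 0
  have hψd : DifferentiableOn ℂ ψ (ball 0 1) :=
    (differentiableOn_dslope (ball_mem_nhds 0 one_pos)).mpr hd
  have hψmaps : MapsTo ψ (ball 0 1) (closedBall 0 1) := fun z hz => by
    simpa using norm_dslope_le_div_of_mapsTo_ball hd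
      (h0.symm ▸ hmaps.mono_right ball_subset_closedBall) hz
  have hω : ω = fun z => z * ψ z := funext fun z => by
    simpa [h0] using (sub_smul_dslope ω 0 z).symm
  have hψ : AnalyticAt ℂ ψ 0 := hψd.analyticAt (ball_mem_nhds 0 one_pos)
  rw [hω, taylorCoeff_id_mul hψ 0, taylorCoeff_id_mul hψ 1, taylorCoeff_zero, taylorCoeff_one]
  exact norm_deriv_le_one_sub_sq_norm hψd hψmaps

end SchwarzPick

lemma MemMlam.exists_taylorCoeff_relations {lam : ℝ} {φ f : ℂ → ℂ}
    (hφd : DifferentiableOn ℂ φ (ball 0 1)) (hφ0 : φ 0 = 1) (hf : MemMlam lam φ f) :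
    ∃ c₁ c₂ : ℂ, ‖c₂‖ ≤ 1 - ‖c₁‖ ^ 2 ∧
      (1 + (lam : ℂ)) * taylorCoeff f 2 = taylorCoeff φ 1 * c₁ ∧
      2 * (1 + 2 * (lam : ℂ)) * taylorCoeff f 3 - (1 + 3 * (lam : ℂ)) * taylorCoeff f 2 ^ 2 =
        taylorCoeff φ 1 * c₂ + taylorCoeff φ 2 * c₁ ^ 2 := by
  obtain ⟨hfd, hf0, hf1, ω, hωd, hω0, hωmaps, heq⟩ := hf
  have h0 : ball (0 : ℂ) 1 ∈ 𝓝 0 := ball_mem_nhds 0 one_pos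
  exact ⟨_, _, norm_taylorCoeff_two_le_one_sub_sq hωd hω0 hωmaps,
    taylorCoeff_relations_of_subordination (hφd.analyticAt h0) (hfd.analyticAt h0)
      (hωd.analyticAt h0) hφ0 hf0 hf1 hω0
      (eventually_nhdsWithin_iff.mpr (mem_of_superset h0 fun z hz hz0 => heq z hz hz0))⟩

lemma IsBiUnivalent.taylorCoeff_two_three {f g : ℂ → ℂ} (h : IsBiUnivalent f g)
    (hg0 : g 0 = 0) : taylorCoeff g 2 = -taylorCoeff f 2 ∧
      taylorCoeff g 3 = 2 * taylorCoeff f 2 ^ 2 - taylorCoeff f 3 := by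
  obtain ⟨hfd, -, hf1, -, hgd, -, hfg⟩ := h
  have h0 : ball (0 : ℂ) 1 ∈ 𝓝 0 := ball_mem_nhds 0 one_pos
  refine taylorCoeff_of_comp_eventuallyEq_id (hfd.analyticAt h0) (hgd.analyticAt h0) hg0 hf1 ?_
  filter_upwards [ball_mem_nhds (0 : ℂ) (by norm_num : (0 : ℝ) < 1 / 4)] with w hw
  exact hfg w (by simpa using hw)

lemma norm_mul_add_mul_add_add_mul_sq_le {p q c d e : ℂ} (hc : ‖c‖ ≤ 1 - ‖e‖ ^ 2)
    (hd : ‖d‖ ≤ 1 - ‖e‖ ^ 2) : ‖q * c + p * d + (q + p) * e ^ 2‖ ≤ ‖q‖ + ‖p‖ := by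
  calc _ ≤ ‖q‖ * ‖c‖ + ‖p‖ * ‖d‖ + (‖q‖ + ‖p‖) * ‖e‖ ^ 2 := by
        refine norm_add₃_le.trans ?_
        rw [norm_mul, norm_mul, norm_mul, norm_pow]
        gcongr
        exact norm_add_le _ _
    _ ≤ ‖q‖ * (1 - ‖e‖ ^ 2) + ‖p‖ * (1 - ‖e‖ ^ 2) + (‖q‖ + ‖p‖) * ‖e‖ ^ 2 := by gcongr
    _ = ‖q‖ + ‖p‖ := by ring

lemma norm_mul_add_sq_mul_add_le {x p c e : ℂ} (hc : ‖c‖ ≤ 1 - ‖e‖ ^ 2) :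
    ‖x * c + e ^ 2 * (p + x)‖ ≤ ‖x‖ + ‖e‖ ^ 2 * ‖p‖ := by
  calc _ ≤ ‖x‖ * ‖c‖ + ‖e‖ ^ 2 * (‖p‖ + ‖x‖) := by
        refine (norm_add_le _ _).trans ?_
        rw [norm_mul, norm_mul, norm_pow]
        gcongr
        exact norm_add_le _ _
    _ ≤ ‖x‖ * (1 - ‖e‖ ^ 2) + ‖e‖ ^ 2 * (‖p‖ + ‖x‖) := by gcongr
    _ = ‖x‖ + ‖e‖ ^ 2 * ‖p‖ := by ring

lemma sq_norm_mul_norm_le {x : ℝ} (hx : 0 ≤ x) {D c d e : ℂ}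
    (h : x * (c + d) = 2 * e ^ 2 * (D - x)) (hc : ‖c‖ ≤ 1 - ‖e‖ ^ 2)
    (hd : ‖d‖ ≤ 1 - ‖e‖ ^ 2) : ‖e‖ ^ 2 * ‖D‖ ≤ x := by
  have hDx : ‖e‖ ^ 2 * ‖D - x‖ ≤ x * (1 - ‖e‖ ^ 2) := by
    have := congrArg norm h
    simp only [norm_mul, norm_pow, Complex.norm_of_nonneg hx, Complex.norm_ofNat] at this
    nlinarith [norm_add_le c d]
  have hD : ‖D‖ ≤ ‖D - x‖ + x := by
    calc ‖D‖ = ‖(D - x) + x‖ := by rw [sub_add_cancel]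
      _ ≤ ‖D - x‖ + x := (norm_add_le _ _).trans_eq (by rw [Complex.norm_of_nonneg hx])
  nlinarith [sq_nonneg ‖e‖]

lemma coeff_three_identities {lam B₁ : ℝ} (hlam : 0 ≤ lam) {B₂ D₁ P Q a₂ a₃ c₁ c₂ d₂ : ℂ}
    (hD₁ : D₁ = (B₁ : ℂ) ^ 2 + (1 + (lam : ℂ)) * ((B₁ : ℂ) - B₂))
    (hP : P = 2 * (1 + 2 * lam) * B₁ ^ 2 - (1 + lam) * D₁)
    (hQ : Q = 2 * (1 + 2 * lam) * B₁ ^ 2 + (1 + lam) * D₁)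
    (hf₂ : (1 + (lam : ℂ)) * a₂ = B₁ * c₁)
    (hf₃ : 2 * (1 + 2 * (lam : ℂ)) * a₃ - (1 + 3 * (lam : ℂ)) * a₂ ^ 2 = B₁ * c₂ + B₂ * c₁ ^ 2)
    (hg₃ : 2 * (1 + 2 * (lam : ℂ)) * (2 * a₂ ^ 2 - a₃) - (1 + 3 * (lam : ℂ)) * (-a₂) ^ 2 =
      B₁ * d₂ + B₂ * (-c₁) ^ 2) :
    (1 + lam) * B₁ * (c₂ + d₂) = 2 * c₁ ^ 2 * (D₁ - (1 + lam) * B₁) ∧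
      4 * (1 + 2 * lam) * (1 + lam) * D₁ * a₃ = B₁ * (Q * c₂ + P * d₂ + (Q + P) * c₁ ^ 2) ∧
      2 * (1 + 2 * lam) * (1 + lam) ^ 2 * a₃ =
        (1 + lam) ^ 2 * B₁ * c₂ + c₁ ^ 2 * (P + (1 + lam) ^ 2 * B₁) := by
  subst hP hQ
  have hT0 : (1 + (lam : ℂ)) ≠ 0 := by exact_mod_cast (by linarith : (1 + lam) ≠ 0)
  have hsum : (1 + lam) * B₁ * (c₂ + d₂) = 2 * c₁ ^ 2 * (D₁ - (1 + lam) * B₁) := by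
    linear_combination -(1 + (lam : ℂ)) * (hf₃ + hg₃) + 2 * ((1 + lam) * a₂ + B₁ * c₁) * hf₂
      - 2 * c₁ ^ 2 * hD₁
  refine ⟨hsum, mul_left_cancel₀ hT0 ?_, ?_⟩
  · linear_combination (1 + (lam : ℂ)) ^ 2 * D₁ * (hf₃ - hg₃)
      - 2 * (1 + 2 * (lam : ℂ)) * B₁ ^ 2 * hsum
      + 4 * (1 + 2 * (lam : ℂ)) * D₁ * ((1 + lam) * a₂ + B₁ * c₁) * hf₂
  · linear_combination (1 + (lam : ℂ)) ^ 2 * hf₃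
      + (1 + 3 * (lam : ℂ)) * ((1 + lam) * a₂ + B₁ * c₁) * hf₂ + (1 + (lam : ℂ)) * c₁ ^ 2 * hD₁

theorem norm_coeff_three_le {lam B₁ : ℝ} (hlam : 0 ≤ lam) (hB₁ : 0 < B₁)
    {B₂ D₁ a₂ a₃ c₁ c₂ d₁ d₂ : ℂ} (hD₁ : D₁ = (B₁ : ℂ) ^ 2 + (1 + (lam : ℂ)) * ((B₁ : ℂ) - B₂))
    (hD₁0 : D₁ ≠ 0) (hc : ‖c₂‖ ≤ 1 - ‖c₁‖ ^ 2) (hd : ‖d₂‖ ≤ 1 - ‖d₁‖ ^ 2)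
    (hf₂ : (1 + (lam : ℂ)) * a₂ = B₁ * c₁)
    (hf₃ : 2 * (1 + 2 * (lam : ℂ)) * a₃ - (1 + 3 * (lam : ℂ)) * a₂ ^ 2 = B₁ * c₂ + B₂ * c₁ ^ 2)
    (hg₂ : (1 + (lam : ℂ)) * -a₂ = B₁ * d₁)
    (hg₃ : 2 * (1 + 2 * (lam : ℂ)) * (2 * a₂ ^ 2 - a₃) - (1 + 3 * (lam : ℂ)) * (-a₂) ^ 2 =
      B₁ * d₂ + B₂ * d₁ ^ 2) :
    ‖a₃‖ ≤ B₁ / (2 * (1 + 2 * lam) * (1 + lam) * ‖D₁‖) * min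
      (1 / 2 * (‖(3 + 5 * (lam : ℂ)) * (B₁ : ℂ) ^ 2 + (1 + (lam : ℂ)) ^ 2 * ((B₁ : ℂ) - B₂)‖
        + ‖(1 + 3 * (lam : ℂ)) * (B₁ : ℂ) ^ 2 - (1 + (lam : ℂ)) ^ 2 * ((B₁ : ℂ) - B₂)‖))
      (‖(1 + 3 * (lam : ℂ)) * (B₁ : ℂ) ^ 2 - (1 + (lam : ℂ)) ^ 2 * ((B₁ : ℂ) - B₂)‖
        + ‖(1 + (lam : ℂ)) * (B₁ : ℂ) ^ 2 + (1 + (lam : ℂ)) ^ 2 * ((B₁ : ℂ) - B₂)‖) := by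
  obtain rfl : d₁ = -c₁ := mul_left_cancel₀ (Complex.ofReal_ne_zero.mpr hB₁.ne')
    (by linear_combination -hg₂ - hf₂)
  rw [norm_neg] at hd
  rw [show (1 + (lam : ℂ)) * (B₁ : ℂ) ^ 2 + (1 + (lam : ℂ)) ^ 2 * ((B₁ : ℂ) - B₂) =
    (1 + lam) * D₁ by rw [hD₁]; ring]
  generalize hQ : (3 + 5 * (lam : ℂ)) * (B₁ : ℂ) ^ 2 + (1 + (lam : ℂ)) ^ 2 * ((B₁ : ℂ) - B₂) = Q
  generalize hP : (1 + 3 * (lam : ℂ)) * (B₁ : ℂ) ^ 2 - (1 + (lam : ℂ)) ^ 2 * ((B₁ : ℂ) - B₂) = P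
  obtain ⟨hsum, hQP, hP'⟩ := coeff_three_identities (P := P) (Q := Q) hlam hD₁
    (by rw [← hP, hD₁]; ring) (by rw [← hQ, hD₁]; ring) hf₂ hf₃ hg₃
  have hT : ‖1 + (lam : ℂ)‖ = 1 + lam := by
    exact_mod_cast Complex.norm_of_nonneg (by linarith : 0 ≤ 1 + lam)
  have hM : ‖1 + 2 * (lam : ℂ)‖ = 1 + 2 * lam := by
    exact_mod_cast Complex.norm_of_nonneg (by linarith : 0 ≤ 1 + 2 * lam)
  have hB : ‖(B₁ : ℂ)‖ = B₁ := Complex.norm_of_nonneg hB₁.le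
  have hDpos : 0 < ‖D₁‖ := norm_pos_iff.mpr hD₁0
  have hden : 0 < 2 * (1 + 2 * lam) * (1 + lam) * ‖D₁‖ := mul_pos (by positivity) hDpos
  rw [norm_mul, hT, mul_min_of_nonneg _ _ (div_pos hB₁ hden).le, le_min_iff,
    div_mul_eq_mul_div B₁, div_mul_eq_mul_div B₁, le_div_iff₀ hden, le_div_iff₀ hden]
  constructor
  · have h1 := congrArg norm hQP
    simp only [norm_mul, hT, hM, hB, Complex.norm_ofNat] at h1
    nlinarith [mul_le_mul_of_nonneg_left
      (norm_mul_add_mul_add_add_mul_sq_le (q := Q) (p := P) hc hd) hB₁.le]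
  · have h2 := congrArg norm hP'
    simp only [norm_mul, norm_pow, hT, hM, Complex.norm_ofNat] at h2
    have hle := norm_mul_add_sq_mul_add_le (x := (1 + lam) ^ 2 * B₁) (p := P) hc
    rw [norm_mul, norm_pow, hT, hB] at hle
    have hs := sq_norm_mul_norm_le (x := (1 + lam) * B₁) (by positivity)
      (by push_cast; exact hsum) hc hd
    refine le_of_mul_le_mul_left ?_ (by linarith : 0 < 1 + lam)
    nlinarith [mul_le_mul_of_nonneg_right hle hDpos.le,
      mul_le_mul_of_nonneg_right hs (norm_nonneg P)]

theorem stmt_7_general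
    (lam : ℝ) (hlam : 0 ≤ lam) (φ f g : ℂ → ℂ)
    (B₁ : ℝ) (B₂ : ℂ) (hB₁ : 0 < B₁)
    (hφ : IsMaMinda φ)
    (hφ1 : deriv φ 0 = (B₁:ℂ))
    (hφ2 : iteratedDeriv 2 φ 0 = 2 * B₂)
    (hbi : IsBiUnivalent f g)
    (hf : MemMlam lam φ f) (hg : MemMlam lam φ g)
    (a : ℕ → ℂ) (ha : ∀ n, a n = iteratedDeriv n f 0 / (n.factorial : ℂ))
    (D₁ : ℂ) (hD₁ : D₁ = (B₁:ℂ)^2 + (1 + (lam:ℂ)) * ((B₁:ℂ) - B₂))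
    (hcond : (1 + lam) * B₁ ≤ ‖D₁‖) :
    ‖a 3‖ ≤ B₁ / (2*(1+2*lam)*(1+lam)*‖D₁‖) * min
      (1/2 * (‖(3+5*(lam:ℂ))*(B₁:ℂ)^2 + (1+(lam:ℂ))^2*((B₁:ℂ)-B₂)‖ + ‖(1+3*(lam:ℂ))*(B₁:ℂ)^2 - (1+(lam:ℂ))^2*((B₁:ℂ)-B₂)‖))
      (‖(1+3*(lam:ℂ))*(B₁:ℂ)^2 - (1+(lam:ℂ))^2*((B₁:ℂ)-B₂)‖ + ‖(1+(lam:ℂ))*(B₁:ℂ)^2 + (1+(lam:ℂ))^2*((B₁:ℂ)-B₂)‖) := by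
  obtain ⟨hφd, -, hφ0, -⟩ := hφ
  have hφB₁ : taylorCoeff φ 1 = B₁ := by rw [taylorCoeff_one, hφ1]
  have hφB₂ : taylorCoeff φ 2 = B₂ := by rw [taylorCoeff, hφ2]; norm_num [Nat.factorial]
  obtain ⟨c₁, c₂, hc, hf₂, hf₃⟩ := hf.exists_taylorCoeff_relations hφd hφ0
  obtain ⟨d₁, d₂, hd, hg₂, hg₃⟩ := hg.exists_taylorCoeff_relations hφd hφ0
  obtain ⟨hg2, hg3⟩ := hbi.taylorCoeff_two_three hg.2.1
  simp only [hφB₁, hφB₂, hg2, hg3] at hf₂ hf₃ hg₂ hg₃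
  have hD₁0 : D₁ ≠ 0 := by
    rintro rfl
    rw [norm_zero] at hcond
    nlinarith
  rw [show a = taylorCoeff f from funext ha]
  exact norm_coeff_three_le hlam hB₁ hD₁ hD₁0 hc hd hf₂ hf₃ hg₂ hg₃

theorem stmt_7
    (lam : ℝ) (hlam : 0 ≤ lam) (φ f g : ℂ → ℂ)
    (B₁ : ℝ) (B₂ B₃ : ℂ) (hB₁ : 0 < B₁)
    (hφ : IsMaMinda φ)
    (hφ1 : deriv φ 0 = (B₁:ℂ))
    (hφ2 : iteratedDeriv 2 φ 0 = 2 * B₂)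
    (hφ3 : iteratedDeriv 3 φ 0 = 6 * B₃)
    (hbi : IsBiUnivalent f g)
    (hf : MemMlam lam φ f) (hg : MemMlam lam φ g)
    (a : ℕ → ℂ) (ha : ∀ n, a n = iteratedDeriv n f 0 / (n.factorial : ℂ))
    (D₁ : ℂ) (hD₁ : D₁ = (B₁:ℂ)^2 + (1 + (lam:ℂ)) * ((B₁:ℂ) - B₂))
    (hcond : (1 + lam) * B₁ ≤ ‖D₁‖) :
    ‖a 3‖ ≤ B₁ / (2*(1+2*lam)*(1+lam)*‖D₁‖) * min
      (1/2 * (‖(3+5*(lam:ℂ))*(B₁:ℂ)^2 + (1+(lam:ℂ))^2*((B₁:ℂ)-B₂)‖ + ‖(1+3*(lam:ℂ))*(B₁:ℂ)^2 - (1+(lam:ℂ))^2*((B₁:ℂ)-B₂)‖))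
      (‖(1+3*(lam:ℂ))*(B₁:ℂ)^2 - (1+(lam:ℂ))^2*((B₁:ℂ)-B₂)‖ + ‖(1+(lam:ℂ))*(B₁:ℂ)^2 + (1+(lam:ℂ))^2*((B₁:ℂ)-B₂)‖) :=
  stmt_7_general lam hlam φ f g B₁ B₂ hB₁ hφ hφ1 hφ2 hbi hf hg a ha D₁ hD₁ hcond
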